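/- arXiv:1606.00728 — 3 statements merged into one kernel-verified Lean document; each statement's English description precedes it below -/
import Mathlib

section
/- Let X, Y, Z be Hilbert spaces, T : X → Y a bounded linear operator, and S : X → Z a bounded injective linear operator. If T is compact, then for every ε > 0 there exists C_ε > 0 such that ‖Tu‖²_Y ≤ ε‖u‖²_X + C_ε‖Su‖²_Z for all u ∈ X. -/
/-!
Argue by contradiction: if the estimate fails for some `ε`, there are unit vectors `wₙ` with
`ε + (n + 1)² ‖S wₙ‖² < ‖T wₙ‖²`, so `S wₙ → 0` while `‖T wₙ‖² ≥ ε`. Since `S` is injective, the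
range of `S†` is dense, and `⟪S† z, wₙ⟫ = ⟪z, S wₙ⟫ → 0` then forces `wₙ ⇀ 0` weakly, the unit
bound making the family `x ↦ ⟪x, wₙ⟫` equicontinuous. A compact operator maps bounded weakly null
sequences to norm null ones: along any ultrafilter `T wₙ` converges in norm, and its limit is
annihilated by every functional. Hence `T wₙ → 0`, a contradiction.
-/

open Filter Topology InnerProductSpace
open scoped InnerProduct

section NormedSpace

variable {𝕜 X Y Z : Type*} [RCLike 𝕜]
  [NormedAddCommGroup X] [NormedSpace 𝕜 X] [NormedAddCommGroup Y] [NormedSpace 𝕜 Y]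
  [NormedAddCommGroup Z] [NormedSpace 𝕜 Z]

theorem exists_norm_eq_one_of_norm_sq_lt {T : X →L[𝕜] Y} {S : X →L[𝕜] Z} {ε C : ℝ} {u : X}
    (hu : ε * ‖u‖ ^ 2 + C * ‖S u‖ ^ 2 < ‖T u‖ ^ 2) :
    ∃ w : X, ‖w‖ = 1 ∧ ε + C * ‖S w‖ ^ 2 < ‖T w‖ ^ 2 := by
  have hu0 : u ≠ 0 := by
    rintro rfl
    simp at hu
  have hpos : 0 < ‖u‖ := norm_pos_iff.mpr hu0
  refine ⟨(‖u‖⁻¹ : 𝕜) • u, ?_, ?_⟩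
  · rw [norm_smul, norm_inv, RCLike.norm_ofReal, abs_norm, inv_mul_cancel₀ hpos.ne']
  · simp only [map_smul, norm_smul, norm_inv, RCLike.norm_ofReal, abs_norm, mul_pow]
    have hr : 0 < (‖u‖ ^ 2)⁻¹ := by positivity
    calc ε + C * ((‖u‖⁻¹) ^ 2 * ‖S u‖ ^ 2)
        = (‖u‖ ^ 2)⁻¹ * (ε * ‖u‖ ^ 2 + C * ‖S u‖ ^ 2) := by field_simp
      _ < (‖u‖ ^ 2)⁻¹ * ‖T u‖ ^ 2 := mul_lt_mul_of_pos_left hu hr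
      _ = ‖u‖⁻¹ ^ 2 * ‖T u‖ ^ 2 := by rw [inv_pow]

theorem IsCompactOperator.tendsto_zero_of_forall_strongDual {ι : Type*} {T : X →L[𝕜] Y}
    (hT : IsCompactOperator T) {l : Filter ι} {w : ι → X} (hw : Bornology.IsBounded (Set.range w))
    (hweak : ∀ f : StrongDual 𝕜 X, Tendsto (fun i ↦ f (w i)) l (𝓝 0)) :
    Tendsto (fun i ↦ T (w i)) l (𝓝 0) := by
  rw [tendsto_iff_ultrafilter]
  intro U hU
  obtain ⟨y, -, hy⟩ := (hT.isCompact_closure_image_of_bounded hw).ultrafilter_le_nhds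
    (U.map fun i ↦ T (w i)) (by
      rw [Ultrafilter.coe_map, le_principal_iff, mem_map]
      exact univ_mem' fun i ↦ subset_closure ⟨w i, ⟨i, rfl⟩, rfl⟩)
  rw [Ultrafilter.coe_map] at hy
  suffices y = 0 from this ▸ hy
  refine SeparatingDual.eq_zero_of_forall_dual_eq_zero (R := 𝕜) fun g ↦ ?_
  exact tendsto_nhds_unique ((g.continuous.tendsto y).comp hy) ((hweak (g.comp T)).mono_left hU)

end NormedSpace

section InnerProductSpace

variable {𝕜 X Z : Type*} [RCLike 𝕜]
  [NormedAddCommGroup X] [InnerProductSpace 𝕜 X] [CompleteSpace X]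
  [NormedAddCommGroup Z] [InnerProductSpace 𝕜 Z] [CompleteSpace Z]

theorem ContinuousLinearMap.denseRange_adjoint_of_injective {S : X →L[𝕜] Z}
    (hS : Function.Injective S) : DenseRange (S†) := by
  have hker : S.ker = ⊥ := LinearMap.ker_eq_bot.mpr hS
  have := S.orthogonal_ker
  rw [hker, Submodule.bot_orthogonal_eq_top] at this
  exact (Submodule.dense_iff_topologicalClosure_eq_top).mpr this.symm

theorem tendsto_strongDual_apply_zero_of_injective {ι : Type*} {S : X →L[𝕜] Z}
    (hS : Function.Injective S) {l : Filter ι} {w : ι → X} (hw : Bornology.IsBounded (Set.range w))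
    (hSw : Tendsto (fun i ↦ S (w i)) l (𝓝 0)) (f : StrongDual 𝕜 X) :
    Tendsto (fun i ↦ f (w i)) l (𝓝 0) := by
  obtain ⟨B, hB⟩ := hw.exists_norm_le
  have hbound : ∀ i x, ‖innerSLFlip 𝕜 (w i) x‖ ≤ B * ‖x‖ := fun i x ↦ by
    rw [innerSLFlip_apply_apply, mul_comm]
    exact (norm_inner_le_norm x (w i)).trans (by gcongr; exact hB _ ⟨i, rfl⟩)
  have hequi : Equicontinuous fun i x ↦ innerSLFlip 𝕜 (w i) x := by
    have := (NormedSpace.equicontinuous_TFAE fun i ↦ innerSLFlip 𝕜 (w i)).out 1 3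
    exact this.mpr ⟨B, hbound⟩
  have hclosed : IsClosed {x : X | Tendsto (fun i ↦ innerSLFlip 𝕜 (w i) x) l (𝓝 0)} :=
    hequi.isClosed_setOfPred_tendsto continuous_const
  have hrange : Set.range (S†) ⊆ {x : X | Tendsto (fun i ↦ innerSLFlip 𝕜 (w i) x) l (𝓝 0)} := by
    rintro _ ⟨z, rfl⟩
    simpa [innerSLFlip_apply_apply, ContinuousLinearMap.adjoint_inner_left] using
      (tendsto_const_nhds (x := z)).inner hSw
  have hall := (S.denseRange_adjoint_of_injective hS).closure_eq ▸
    hclosed.closure_subset_iff.mpr hrange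
  simpa [innerSLFlip_apply_apply, toDual_symm_apply] using
    hall (Set.mem_univ ((toDual 𝕜 X).symm f))

end InnerProductSpace

theorem stmt9_general
    {X Y Z : Type*}
    [NormedAddCommGroup X] [InnerProductSpace ℂ X] [CompleteSpace X]
    [NormedAddCommGroup Y] [InnerProductSpace ℂ Y]
    [NormedAddCommGroup Z] [InnerProductSpace ℂ Z] [CompleteSpace Z]
    (T : X →L[ℂ] Y) (S : X →L[ℂ] Z) (hS : Function.Injective S)
    (hT : IsCompactOperator T) :
    ∀ ε > (0 : ℝ), ∃ C > (0 : ℝ), ∀ u : X,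
      ‖T u‖ ^ 2 ≤ ε * ‖u‖ ^ 2 + C * ‖S u‖ ^ 2 := by
  intro ε hε
  by_contra! h
  choose w hw_norm hw_lt using fun n : ℕ ↦
    have ⟨_, hu⟩ := h ((n + 1) ^ 2) (by positivity)
    exists_norm_eq_one_of_norm_sq_lt hu
  have hw_bdd : Bornology.IsBounded (Set.range w) :=
    isBounded_iff_forall_norm_le.mpr ⟨1, by rintro _ ⟨n, rfl⟩; exact (hw_norm n).le⟩
  have hSw_le : ∀ n : ℕ, ‖S (w n)‖ ≤ ‖T‖ * (1 / ((n : ℝ) + 1)) := fun n ↦ by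
    have hTw : ‖T (w n)‖ ≤ ‖T‖ := by simpa [hw_norm n] using T.le_opNorm (w n)
    rw [mul_one_div, le_div_iff₀ (by positivity), mul_comm]
    refine le_of_sq_le_sq ?_ (norm_nonneg T)
    nlinarith [hw_lt n, pow_le_pow_left₀ (norm_nonneg _) hTw 2]
  have hSw : Tendsto (fun n ↦ S (w n)) atTop (𝓝 0) :=
    squeeze_zero_norm hSw_le <| by
      simpa using tendsto_one_div_add_atTop_nhds_zero_nat.const_mul ‖T‖
  have hTw : Tendsto (fun n ↦ ‖T (w n)‖ ^ 2) atTop (𝓝 0) := by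
    simpa using ((hT.tendsto_zero_of_forall_strongDual hw_bdd
      (tendsto_strongDual_apply_zero_of_injective hS hw_bdd hSw)).norm).pow 2
  have : ε ≤ 0 := ge_of_tendsto' hTw fun n ↦
    ((le_add_of_nonneg_right (by positivity)).trans_lt (hw_lt n)).le
  linarith

/-- If `T : X → Y` is compact and `S : X → Z` is bounded and injective, then for every
`ε > 0` there is `C_ε > 0` with `‖Tu‖² ≤ ε‖u‖² + C_ε‖Su‖²` for all `u`. -/
theorem stmt9
    {X Y Z : Type*}
    [NormedAddCommGroup X] [InnerProductSpace ℂ X] [CompleteSpace X]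
    [NormedAddCommGroup Y] [InnerProductSpace ℂ Y] [CompleteSpace Y]
    [NormedAddCommGroup Z] [InnerProductSpace ℂ Z] [CompleteSpace Z]
    (T : X →L[ℂ] Y) (S : X →L[ℂ] Z) (hS : Function.Injective S)
    (hT : IsCompactOperator T) :
    ∀ ε > (0 : ℝ), ∃ C > (0 : ℝ), ∀ u : X,
      ‖T u‖ ^ 2 ≤ ε * ‖u‖ ^ 2 + C * ‖S u‖ ^ 2 :=
  stmt9_general T S hS hT
end

section
/- Let X, Y be Hilbert spaces and T : X → Y a bounded linear operator. Assume that for every ε > 0 there exist a Hilbert space Z_ε, a compact linear operator S_ε : X → Z_ε, and a constant C_ε > 0 such that ‖Tu‖²_Y ≤ ε‖u‖²_X + C_ε‖S_ε u‖²_{Z_ε} for all u ∈ X. Then T is compact. -/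
/-!
The image of the unit ball under `T` is totally bounded: given `r > 0`, take the estimate with
`ε = r² / 8`. If `u, v` lie in the unit ball and `S u, S v` are close, the estimate applied to
`u - v` gives `‖T u - T v‖² ≤ r² / 2 + C ‖S u - S v‖² < r²`, so a finite net for the
(totally bounded) image of the unit ball under the compact operator `S` pulls back to a finite
`r`-net for its image under `T`.
-/

open Metric Set

universe w

theorem exists_finite_cover_image_of_dist_lt {α β γ : Type*} [PseudoMetricSpace β]
    [PseudoMetricSpace γ] {f : α → β} {g : α → γ} {s : Set α} (hg : TotallyBounded (g '' s))
    {δ r : ℝ} (hδ : 0 < δ)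
    (hfg : ∀ x ∈ s, ∀ y ∈ s, dist (g x) (g y) < δ → dist (f x) (f y) < r) :
    ∃ t : Set β, t.Finite ∧ f '' s ⊆ ⋃ y ∈ t, ball y r := by
  obtain ⟨t, hts, htf, hcov⟩ :=
    exists_subset_image_finite_and.1 (finite_approx_of_totallyBounded hg δ hδ)
  refine ⟨f '' t, htf.image f, ?_⟩
  rintro _ ⟨x, hx, rfl⟩
  obtain ⟨_, ⟨y, hy, rfl⟩, hxy⟩ := mem_iUnion₂.1 (hcov ⟨x, hx, rfl⟩)
  exact mem_iUnion₂.2 ⟨f y, mem_image_of_mem f hy, hfg x hx y (hts hy) hxy⟩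

theorem norm_sub_sq_le_of_sq_norm_le {𝕜 E F G : Type*} [NormedField 𝕜]
    [SeminormedAddCommGroup E] [NormedSpace 𝕜 E] [SeminormedAddCommGroup F] [NormedSpace 𝕜 F]
    [SeminormedAddCommGroup G] [NormedSpace 𝕜 G] {T : E →L[𝕜] F} {S : E →L[𝕜] G} {ε C : ℝ}
    (hε : 0 ≤ ε) (hTS : ∀ u, ‖T u‖ ^ 2 ≤ ε * ‖u‖ ^ 2 + C * ‖S u‖ ^ 2) {u v : E}
    (hu : ‖u‖ ≤ 1) (hv : ‖v‖ ≤ 1) :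
    ‖T u - T v‖ ^ 2 ≤ 4 * ε + C * ‖S u - S v‖ ^ 2 := by
  have huv : ‖u - v‖ ≤ 2 := (norm_sub_le u v).trans (by linarith)
  calc ‖T u - T v‖ ^ 2 ≤ ε * ‖u - v‖ ^ 2 + C * ‖S u - S v‖ ^ 2 := by
        simpa only [map_sub] using hTS (u - v)
    _ ≤ ε * 2 ^ 2 + C * ‖S u - S v‖ ^ 2 := by gcongr
    _ = 4 * ε + C * ‖S u - S v‖ ^ 2 := by ring

theorem isCompactOperator_of_forall_sq_norm_le {𝕜 E F : Type*} [NontriviallyNormedField 𝕜]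
    [SeminormedAddCommGroup E] [NormedSpace 𝕜 E] [NormedAddCommGroup F] [NormedSpace 𝕜 F]
    [CompleteSpace F] (T : E →L[𝕜] F)
    (h : ∀ ε > (0 : ℝ), ∃ (G : Type w) (_ : NormedAddCommGroup G) (_ : NormedSpace 𝕜 G)
      (S : E →L[𝕜] G) (C : ℝ), 0 ≤ C ∧ IsCompactOperator S ∧
      ∀ u, ‖T u‖ ^ 2 ≤ ε * ‖u‖ ^ 2 + C * ‖S u‖ ^ 2) :
    IsCompactOperator T := by
  refine (isCompactOperator_iff_isCompact_closure_image_closedBall (T : E →ₗ[𝕜] F) one_pos).2 ?_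
  refine (TotallyBounded.closure ?_).isCompact_of_isClosed isClosed_closure
  refine totallyBounded_iff.2 fun r hr => ?_
  obtain ⟨G, _, _, S, C, hC, hS, hTS⟩ := h (r ^ 2 / 8) (by positivity)
  obtain ⟨η, hη, hCη⟩ := exists_pos_mul_lt (by positivity : 0 < r ^ 2 / 2) C
  have hSball : TotallyBounded (S '' closedBall 0 1) :=
    (hS.isCompact_closure_image_closedBall 1).totallyBounded.subset subset_closure
  refine exists_finite_cover_image_of_dist_lt hSball (Real.sqrt_pos.2 hη)
    fun u hu v hv hSuv => ?_
  rw [mem_closedBall_zero_iff] at hu hv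
  rw [dist_eq_norm] at hSuv ⊢
  have hSuv' : C * ‖S u - S v‖ ^ 2 ≤ C * η :=
    mul_le_mul_of_nonneg_left (Real.lt_sqrt (norm_nonneg _) |>.1 hSuv).le hC
  refine lt_of_pow_lt_pow_left₀ 2 hr.le ?_
  calc ‖T u - T v‖ ^ 2 ≤ 4 * (r ^ 2 / 8) + C * ‖S u - S v‖ ^ 2 :=
        norm_sub_sq_le_of_sq_norm_le (by positivity) hTS hu hv
    _ < r ^ 2 := by linarith

theorem stmt10_general
    {X Y : Type*}
    [NormedAddCommGroup X] [InnerProductSpace ℂ X]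
    [NormedAddCommGroup Y] [InnerProductSpace ℂ Y] [CompleteSpace Y]
    (T : X →L[ℂ] Y)
    (h : ∀ ε > (0 : ℝ), ∃ (Z : Type) (_ : NormedAddCommGroup Z) (_ : InnerProductSpace ℂ Z)
      (_ : CompleteSpace Z) (Sε : X →L[ℂ] Z) (C : ℝ), 0 < C ∧ IsCompactOperator Sε ∧
      ∀ u : X, ‖T u‖ ^ 2 ≤ ε * ‖u‖ ^ 2 + C * ‖Sε u‖ ^ 2) :
    IsCompactOperator T :=
  isCompactOperator_of_forall_sq_norm_le T fun ε hε =>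
    let ⟨Z, _, _, _, S, C, hC, hS, hTS⟩ := h ε hε
    ⟨Z, inferInstance, inferInstance, S, C, hC.le, hS, hTS⟩

/-- If `T : X → Y` is bounded and for every `ε > 0` there are a Hilbert space `Z_ε`, a compact
operator `S_ε : X → Z_ε`, and `C_ε > 0` with `‖Tu‖² ≤ ε‖u‖² + C_ε‖S_ε u‖²` for all `u`,
then `T` is compact. -/
theorem stmt10
    {X Y : Type*}
    [NormedAddCommGroup X] [InnerProductSpace ℂ X] [CompleteSpace X]
    [NormedAddCommGroup Y] [InnerProductSpace ℂ Y] [CompleteSpace Y]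
    (T : X →L[ℂ] Y)
    (h : ∀ ε > (0 : ℝ), ∃ (Z : Type) (_ : NormedAddCommGroup Z) (_ : InnerProductSpace ℂ Z)
      (_ : CompleteSpace Z) (Sε : X →L[ℂ] Z) (C : ℝ), 0 < C ∧ IsCompactOperator Sε ∧
      ∀ u : X, ‖T u‖ ^ 2 ≤ ε * ‖u‖ ^ 2 + C * ‖Sε u‖ ^ 2) :
    IsCompactOperator T :=
  stmt10_general T h
end

section
/- Let 1 ≤ q ≤ n and let A be an n×n Hermitian matrix. The following are equivalent: (i) for every (0,q)-multi-index array (w_J)_{|J|=q} of complex numbers (indexed by strictly increasing q-tuples J from {1,...,n}, extended antisymmetrically to all q-tuples), one has ∑'_{|K|=q-1} ∑_{j,k=1}^n A_{jk} w_{jK} \overline{w_{kK}} ≥ c ∑'_{|J|=q} |w_J|²; (ii) the sum of the q smallest eigenvalues of A is at least c. -/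
/-!
In an orthonormal eigenbasis of `A` the form becomes diagonal: the change of coordinates acts on
`q`-arrays by the `q`-fold Kronecker power of a unitary matrix, which preserves alternation and the
`ℓ²` norm, and turns the form, summed over all tuples, into `∑_M λ_{M_1} |v_M|²`. Since `|v_M|²` is
symmetric in `M`, every slot contributes equally; as sums over all tuples are `q!` times sums over
increasing ones, the condition (i) reads `c ∑'_M |v_M|² ≤ ∑'_M (λ_{M_1} + ⋯ + λ_{M_q}) |v_M|²` for
all alternating `v`. This follows termwise from (ii), and testing it on `e_{i_1} ∧ ⋯ ∧ e_{i_q}`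
gives (ii).
-/

open scoped Classical

open Matrix Equiv Function Finset

namespace Matrix

variable {κ ι R : Type*}

def kroneckerPi [Fintype κ] [CommMonoid R] (B : κ → Matrix ι ι R) : Matrix (κ → ι) (κ → ι) R :=
  of fun M N => ∏ t, B t (M t) (N t)

@[simp]
theorem kroneckerPi_apply [Fintype κ] [CommMonoid R] (B : κ → Matrix ι ι R) (M N : κ → ι) :
    kroneckerPi B M N = ∏ t, B t (M t) (N t) :=
  rfl

theorem kroneckerPi_mul [Fintype κ] [DecidableEq κ] [Fintype ι] [CommSemiring R]
    (B C : κ → Matrix ι ι R) : kroneckerPi B * kroneckerPi C = kroneckerPi (B * C) := by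
  ext M N
  simp only [mul_apply, kroneckerPi_apply, Pi.mul_apply, Fintype.prod_sum, Finset.prod_mul_distrib]

theorem kroneckerPi_one [Fintype κ] [DecidableEq κ] [DecidableEq ι] [CommSemiring R] :
    kroneckerPi (1 : κ → Matrix ι ι R) = 1 := by
  ext M N
  simp [one_apply, Finset.prod_boole, funext_iff]

theorem conjTranspose_kroneckerPi [Fintype κ] [CommSemiring R] [StarRing R]
    (B : κ → Matrix ι ι R) : (kroneckerPi B)ᴴ = kroneckerPi fun t => (B t)ᴴ := by
  ext M N
  simp [star_prod]

theorem kroneckerPi_mem_unitaryGroup [Fintype κ] [DecidableEq κ] [Fintype ι] [DecidableEq ι]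
    [CommRing R] [StarRing R] {B : κ → Matrix ι ι R} (hB : ∀ t, B t ∈ unitaryGroup ι R) :
    kroneckerPi B ∈ unitaryGroup (κ → ι) R := by
  rw [mem_unitaryGroup_iff', star_eq_conjTranspose, conjTranspose_kroneckerPi, kroneckerPi_mul,
    ← kroneckerPi_one]
  congr 1
  funext t
  exact mem_unitaryGroup_iff'.mp (hB t)

theorem kroneckerPi_cons_apply [CommMonoid R] {m : ℕ} (C : Matrix ι ι R)
    (B : Fin m → Matrix ι ι R) (M N : Fin (m + 1) → ι) :
    kroneckerPi (Fin.cons C B : Fin (m + 1) → Matrix ι ι R) M N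
      = C (M 0) (N 0) * kroneckerPi B (Fin.tail M) (Fin.tail N) := by
  simp [Fin.prod_univ_succ, Fin.tail]

theorem star_mulVec_dotProduct_mulVec_mulVec [Fintype κ] [CommSemiring R] [StarRing R]
    (T X : Matrix κ κ R) (v : κ → R) :
    star (T *ᵥ v) ⬝ᵥ X *ᵥ (T *ᵥ v) = star v ⬝ᵥ (Tᴴ * X * T) *ᵥ v := by
  rw [← mulVec_mulVec, ← mulVec_mulVec, dotProduct_mulVec (star v), star_mulVec]

theorem star_dotProduct_diagonal_mulVec [Fintype κ] [DecidableEq κ] (e : κ → ℝ) (v : κ → ℂ) :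
    star v ⬝ᵥ diagonal (fun i => (e i : ℂ)) *ᵥ v = ((∑ i, e i * Complex.normSq (v i) : ℝ) : ℂ) := by
  push_cast
  refine sum_congr rfl fun i _ => ?_
  rw [mulVec_diagonal, Complex.normSq_eq_conj_mul_self]
  simp only [Pi.star_apply, Complex.star_def]
  ring

theorem sum_normSq_mulVec_of_mem_unitaryGroup [Fintype κ] [DecidableEq κ]
    {T : Matrix κ κ ℂ} (hT : T ∈ unitaryGroup κ ℂ) (v : κ → ℂ) :
    ∑ i, Complex.normSq ((T *ᵥ v) i) = ∑ i, Complex.normSq (v i) := by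
  have h := star_mulVec_dotProduct_mulVec_mulVec T 1 v
  have hnorm (u : κ → ℂ) : star u ⬝ᵥ u = ((∑ i, Complex.normSq (u i) : ℝ) : ℂ) := by
    simpa using star_dotProduct_diagonal_mulVec (fun _ => 1) u
  rw [Matrix.mul_one, ← star_eq_conjTranspose, mem_unitaryGroup_iff'.mp hT, one_mulVec,
    one_mulVec, hnorm, hnorm] at h
  exact_mod_cast h

theorem kroneckerPi_cons_diagonal_one [DecidableEq ι] [CommSemiring R] {m : ℕ} (d : ι → R) :
    kroneckerPi (Fin.cons (diagonal d) 1 : Fin (m + 1) → Matrix ι ι R)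
      = diagonal fun M => d (M 0) := by
  ext M N
  cases M using Fin.consCases
  cases N using Fin.consCases
  simp only [kroneckerPi_cons_apply, kroneckerPi_one, diagonal_apply, one_apply, Fin.cons_zero,
    Fin.tail_cons, Fin.cons_inj]
  split_ifs <;> simp_all

theorem IsHermitian.exists_mem_unitaryGroup_transpose_eq [Fintype ι] [DecidableEq ι]
    {A : Matrix ι ι ℂ} (hA : A.IsHermitian) :
    ∃ B ∈ unitaryGroup ι ℂ, Aᵀ = Bᴴ * diagonal (fun i => (hA.eigenvalues i : ℂ)) * B := by
  refine ⟨(hA.eigenvectorUnitary : Matrix ι ι ℂ)ᵀ,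
    transpose_mem_unitaryGroup_iff.mpr (SetLike.coe_mem _), ?_⟩
  conv_lhs => rw [hA.spectral_theorem]
  rw [Unitary.conjStarAlgAut_apply, transpose_mul, transpose_mul, diagonal_transpose,
    ← Matrix.mul_assoc, star_eq_conjTranspose, conjTranspose_transpose_eq_transpose_conjTranspose]
  rfl

end Matrix

section Alternating

variable {ι R : Type*} {m : ℕ}

def IsAlternating [CommRing R] (w : (Fin m → ι) → R) : Prop :=
  ∀ (J : Fin m → ι) (σ : Perm (Fin m)), w (J ∘ σ) = ((Perm.sign σ : ℤ) : R) * w J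

theorem IsAlternating.eq_zero_of_not_injective [CommRing R] [NoZeroDivisors R] [CharZero R]
    {w : (Fin m → ι) → R} (hw : IsAlternating w) {J : Fin m → ι} (hJ : ¬ Injective J) :
    w J = 0 := by
  obtain ⟨a, b, hab, hne⟩ : ∃ a b, J a = J b ∧ a ≠ b := by
    simpa [Injective] using hJ
  have hswap : J ∘ swap a b = J := by
    funext t
    simp only [Function.comp_apply, swap_apply_def]
    split_ifs <;> simp_all
  exact self_eq_neg.mp (by simpa [hswap, Perm.sign_swap hne] using hw J (swap a b))

theorem IsAlternating.mul_conj_comp {w : (Fin m → ι) → ℂ} (hw : IsAlternating w)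
    (J J' : Fin m → ι) (σ : Perm (Fin m)) :
    w (J ∘ σ) * starRingEnd ℂ (w (J' ∘ σ)) = w J * starRingEnd ℂ (w J') := by
  rw [hw J, hw J', map_mul]
  rcases Int.units_eq_one_or (Perm.sign σ) with h | h <;> simp [h]

theorem IsAlternating.normSq_comp {w : (Fin m → ι) → ℂ} (hw : IsAlternating w)
    (J : Fin m → ι) (σ : Perm (Fin m)) : Complex.normSq (w (J ∘ σ)) = Complex.normSq (w J) := by
  have := hw.mul_conj_comp J J σ
  rwa [Complex.mul_conj, Complex.mul_conj, Complex.ofReal_inj] at this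

theorem IsAlternating.kroneckerPi_mulVec [Fintype ι] [CommRing R] {w : (Fin m → ι) → R}
    (hw : IsAlternating w) (B : Matrix ι ι R) :
    IsAlternating (kroneckerPi (fun _ => B) *ᵥ w) := by
  intro M σ
  simp only [mulVec, dotProduct, kroneckerPi_apply, mul_sum]
  refine Fintype.sum_equiv (arrowCongr σ (Equiv.refl ι)) _ _ fun N => ?_
  show _ = _ * ((∏ t, B (M t) (N (σ.symm t))) * w (N ∘ σ.symm))
  conv_lhs => rw [show N = (N ∘ σ.symm) ∘ σ by simp [comp_assoc], hw, ← σ.symm.prod_comp]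
  simp only [Function.comp_apply, apply_symm_apply]
  ring

theorem IsAlternating.sum_comp_mul_normSq [Fintype ι] {v : (Fin m → ι) → ℂ} (hv : IsAlternating v)
    (g : (Fin m → ι) → ℝ) (σ : Perm (Fin m)) :
    ∑ M, g (M ∘ σ) * Complex.normSq (v M) = ∑ M, g M * Complex.normSq (v M) :=
  Fintype.sum_equiv (Equiv.arrowCongr σ.symm (Equiv.refl ι)) _ _ fun M => by
    rw [← hv.normSq_comp M σ]
    rfl

theorem IsAlternating.sum_sum_mul_normSq [Fintype ι] {v : (Fin (m + 1) → ι) → ℂ}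
    (hv : IsAlternating v)
    (d : ι → ℝ) :
    ∑ M, (∑ t, d (M t)) * Complex.normSq (v M)
      = (m + 1) * ∑ M, d (M 0) * Complex.normSq (v M) := by
  have hslot (t : Fin (m + 1)) :
      ∑ M, d (M t) * Complex.normSq (v M) = ∑ M, d (M 0) * Complex.normSq (v M) := by
    simpa using hv.sum_comp_mul_normSq (fun M => d (M 0)) (swap 0 t)
  simp only [sum_mul]
  rw [sum_comm, sum_congr rfl fun t _ => hslot t, sum_const, card_univ, Fintype.card_fin,
    nsmul_eq_mul, Nat.cast_add, Nat.cast_one]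

end Alternating

theorem sum_eq_factorial_smul_sum_strictMono {ι M : Type*} [Fintype ι] [LinearOrder ι]
    [AddCommMonoid M] {m : ℕ} (f : (Fin m → ι) → M) (hf : ∀ J (σ : Perm (Fin m)), f (J ∘ σ) = f J)
    (hf₀ : ∀ J, ¬ Injective J → f J = 0) :
    ∑ J, f J = m.factorial • ∑ J ∈ univ.filter (fun J : Fin m → ι => StrictMono J), f J := by
  have hperm : ∀ J, m.factorial • f J = ∑ σ : Perm (Fin m), f (J ∘ σ) := fun J => by
    simp [hf, Fintype.card_perm]
  rw [smul_sum, sum_congr rfl fun J _ => hperm J, ← sum_product',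
    ← sum_filter_of_ne fun J _ h => by_contra fun hJ => h (hf₀ J hJ)]
  refine (sum_bij (fun p _ => p.1 ∘ p.2) ?_ ?_ ?_ fun _ _ => rfl).symm
  · rintro ⟨J, σ⟩ hp
    simp only [mem_product, mem_filter, mem_univ, true_and, and_true] at hp ⊢
    exact hp.injective.comp σ.injective
  · rintro ⟨J₁, σ₁⟩ h₁ ⟨J₂, σ₂⟩ h₂ (heq : J₁ ∘ σ₁ = J₂ ∘ σ₂)
    simp only [mem_product, mem_filter, mem_univ, true_and, and_true] at h₁ h₂
    obtain rfl : J₁ = J₂ := by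
      rw [← h₁.range_inj h₂, ← σ₁.surjective.range_comp, heq, σ₂.surjective.range_comp]
    exact Prod.ext rfl <| Equiv.ext fun t => h₁.injective (congrFun heq t)
  · intro J hJ
    simp only [mem_filter, mem_univ, true_and] at hJ
    refine ⟨(J ∘ Tuple.sort J, (Tuple.sort J)⁻¹), ?_, ?_⟩
    · simp only [mem_product, mem_filter, mem_univ, true_and, and_true]
      exact (Tuple.monotone_sort J).strictMono_of_injective (hJ.comp (Tuple.sort J).injective)
    · funext t
      simp

section Contraction

variable {ι : Type*} [Fintype ι] {m : ℕ}

def contraction {R : Type*} [CommSemiring R] [StarRing R] (A : Matrix ι ι R)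
    (w : (Fin (m + 1) → ι) → R) (K : Fin m → ι) : R :=
  ∑ j, ∑ k, A j k * w (Fin.cons j K) * starRingEnd R (w (Fin.cons k K))

theorem sum_contraction_eq_star_dotProduct [DecidableEq ι] {R : Type*} [CommSemiring R]
    [StarRing R] (A : Matrix ι ι R) (w : (Fin (m + 1) → ι) → R) :
    ∑ K, contraction A w K
      = star w ⬝ᵥ kroneckerPi (Fin.cons Aᵀ 1 : Fin (m + 1) → Matrix ι ι R) *ᵥ w := by
  have hcons (g : (Fin (m + 1) → ι) → R) : ∑ M, g M = ∑ k, ∑ K, g (Fin.cons k K) := by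
    rw [← (Fin.consEquiv fun _ => ι).sum_comp, Fintype.sum_prod_type]
    rfl
  have hrow (k : ι) (K : Fin m → ι) :
      (kroneckerPi (Fin.cons Aᵀ 1 : Fin (m + 1) → Matrix ι ι R) *ᵥ w) (Fin.cons k K)
        = ∑ j, A j k * w (Fin.cons j K) := by
    rw [mulVec, dotProduct, hcons]
    refine sum_congr rfl fun j _ => ?_
    simp only [kroneckerPi_cons_apply, kroneckerPi_one, Fin.cons_zero, Fin.tail_cons,
      transpose_apply, one_apply, mul_ite, mul_one, mul_zero, ite_mul, zero_mul, sum_ite_eq,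
      mem_univ, if_true]
  unfold contraction
  symm
  rw [dotProduct, hcons, sum_comm]
  refine sum_congr rfl fun K _ => ?_
  simp only [hrow, Pi.star_apply, mul_sum]
  rw [sum_comm]
  refine sum_congr rfl fun j _ => sum_congr rfl fun k _ => ?_
  rw [starRingEnd_apply]
  ring

theorem IsAlternating.contraction_comp {w : (Fin (m + 1) → ι) → ℂ} (hw : IsAlternating w)
    (A : Matrix ι ι ℂ) (K : Fin m → ι) (σ : Perm (Fin m)) :
    contraction A w (K ∘ σ) = contraction A w K := by
  have hcons (j : ι) : Fin.cons j (K ∘ σ) = Fin.cons j K ∘ Perm.decomposeFin.symm (0, σ) := by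
    funext t
    cases t using Fin.cases <;>
      simp [Perm.decomposeFin_symm_apply_zero, Perm.decomposeFin_symm_apply_succ]
  refine sum_congr rfl fun j _ => sum_congr rfl fun k _ => ?_
  rw [hcons, hcons, mul_assoc, hw.mul_conj_comp, mul_assoc]

theorem IsAlternating.contraction_eq_zero {w : (Fin (m + 1) → ι) → ℂ} (hw : IsAlternating w)
    (A : Matrix ι ι ℂ) {K : Fin m → ι} (hK : ¬ Injective K) : contraction A w K = 0 := by
  have hzero (j : ι) : w (Fin.cons j K) = 0 :=
    hw.eq_zero_of_not_injective fun h => hK (Fin.cons_injective_iff.mp h).2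
  simp [contraction, hzero]

variable [DecidableEq ι]

theorem sum_contraction_eq_sum_normSq {A B : Matrix ι ι ℂ} {d : ι → ℝ}
    (hB : B ∈ unitaryGroup ι ℂ) (hAB : Aᵀ = Bᴴ * diagonal (fun i => (d i : ℂ)) * B)
    (w : (Fin (m + 1) → ι) → ℂ) :
    ∑ K, contraction A w K
      = ((∑ M, d (M 0) * Complex.normSq ((kroneckerPi (fun _ => B) *ᵥ w) M) : ℝ) : ℂ) := by
  have hconj : kroneckerPi (Fin.cons Aᵀ 1 : Fin (m + 1) → Matrix ι ι ℂ)
      = (kroneckerPi fun _ => B)ᴴ * kroneckerPi (Fin.cons (diagonal fun i => (d i : ℂ)) 1)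
          * kroneckerPi fun _ => B := by
    rw [conjTranspose_kroneckerPi, kroneckerPi_mul, kroneckerPi_mul, hAB]
    congr 1
    funext t
    cases t using Fin.cases
    · rfl
    · simp [← star_eq_conjTranspose, mem_unitaryGroup_iff'.mp hB]
  rw [sum_contraction_eq_star_dotProduct, hconj,
    ← star_mulVec_dotProduct_mulVec_mulVec, kroneckerPi_cons_diagonal_one]
  exact star_dotProduct_diagonal_mulVec (κ := Fin (m + 1) → ι) (fun M => d (M 0)) _

end Contraction

section StrictMono

variable {ι : Type*} [Fintype ι] [LinearOrder ι] {m : ℕ}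

theorem IsAlternating.sum_strictMono_normSq_kroneckerPi_mulVec {B : Matrix ι ι ℂ}
    (hB : B ∈ unitaryGroup ι ℂ) {w : (Fin m → ι) → ℂ} (hw : IsAlternating w) :
    ∑ J ∈ univ.filter (fun J : Fin m → ι => StrictMono J),
        Complex.normSq ((kroneckerPi (fun _ => B) *ᵥ w) J)
      = ∑ J ∈ univ.filter (fun J : Fin m → ι => StrictMono J), Complex.normSq (w J) := by
  have hv := hw.kroneckerPi_mulVec B
  have h := sum_normSq_mulVec_of_mem_unitaryGroup (kroneckerPi_mem_unitaryGroup fun _ => hB) w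
  rwa [sum_eq_factorial_smul_sum_strictMono _ hv.normSq_comp
      fun J hJ => by rw [hv.eq_zero_of_not_injective hJ, map_zero],
    sum_eq_factorial_smul_sum_strictMono _ hw.normSq_comp
      fun J hJ => by rw [hw.eq_zero_of_not_injective hJ, map_zero],
    nsmul_eq_mul, nsmul_eq_mul, mul_right_inj' (by positivity)] at h

theorem IsAlternating.re_sum_strictMono_contraction {A B : Matrix ι ι ℂ} {d : ι → ℝ}
    (hB : B ∈ unitaryGroup ι ℂ) (hAB : Aᵀ = Bᴴ * diagonal (fun i => (d i : ℂ)) * B)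
    {w : (Fin (m + 1) → ι) → ℂ} (hw : IsAlternating w) :
    (∑ K ∈ univ.filter (fun K : Fin m → ι => StrictMono K), contraction A w K).re
      = ∑ M ∈ univ.filter (fun M : Fin (m + 1) → ι => StrictMono M),
          (∑ t, d (M t)) * Complex.normSq ((kroneckerPi (fun _ => B) *ᵥ w) M) := by
  set v := kroneckerPi (fun _ => B) *ᵥ w
  have hv : IsAlternating v := hw.kroneckerPi_mulVec B
  have hform := sum_contraction_eq_sum_normSq hB hAB w
  rw [sum_eq_factorial_smul_sum_strictMono _ (hw.contraction_comp A)
    fun K hK => hw.contraction_eq_zero A hK, nsmul_eq_mul] at hform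
  have hdiag := hv.sum_sum_mul_normSq d
  rw [sum_eq_factorial_smul_sum_strictMono _
      (fun M σ => by rw [hv.normSq_comp, Function.comp_def, Equiv.sum_comp σ (fun t => d (M t))])
      fun M hM => by rw [hv.eq_zero_of_not_injective hM, map_zero, mul_zero],
    nsmul_eq_mul, Nat.factorial_succ, Nat.cast_mul] at hdiag
  have hre := congrArg Complex.re hform
  rw [← Complex.ofReal_natCast, Complex.re_ofReal_mul, Complex.ofReal_re] at hre
  push_cast at hdiag
  refine mul_left_cancel₀ (by positivity : ((m + 1) * m.factorial : ℝ) ≠ 0) ?_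
  linear_combination (↑m + 1) * hre - hdiag

omit [Fintype ι] in
theorem exists_isAlternating_eq_ite_orderEmbOfFin (s : Finset ι) (hs : s.card = m) :
    ∃ v : (Fin m → ι) → ℂ, IsAlternating v ∧
      ∀ J, StrictMono J → v J = if J = s.orderEmbOfFin hs then 1 else 0 := by
  set E : Fin m → ι := ⇑(s.orderEmbOfFin hs)
  -- the coefficients of `e_{E 0} ∧ ⋯ ∧ e_{E (m - 1)}`
  refine ⟨fun J => ((1 : Matrix ι ι ℂ).submatrix J E).det,
    fun J σ => det_permute σ (submatrix 1 J E), fun J hJ => ?_⟩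
  split_ifs with hJE
  · rw [hJE]
    exact (congrArg det (submatrix_one _ (s.orderEmbOfFin hs).injective)).trans det_one
  · obtain ⟨a, ha⟩ : ∃ a, J a ∉ s := by
      by_contra! h
      exact hJE (s.orderEmbOfFin_unique hs h hJ)
    refine det_eq_zero_of_row_eq_zero a fun b => ?_
    rw [submatrix_apply, one_apply_ne]
    exact fun h => ha (h ▸ s.orderEmbOfFin_mem hs b)

theorem forall_isAlternating_le_iff (d : ι → ℝ) (c : ℝ) :
    (∀ v : (Fin m → ι) → ℂ, IsAlternating v →
      c * ∑ J ∈ univ.filter (fun J : Fin m → ι => StrictMono J), Complex.normSq (v J)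
        ≤ ∑ J ∈ univ.filter (fun J : Fin m → ι => StrictMono J),
            (∑ t, d (J t)) * Complex.normSq (v J)) ↔
      ∀ s : Finset ι, s.card = m → c ≤ ∑ i ∈ s, d i := by
  constructor
  · intro h s hs
    obtain ⟨v, hv, hvE⟩ := exists_isAlternating_eq_ite_orderEmbOfFin s hs
    have hsum (g : (Fin m → ι) → ℝ) :
        ∑ J ∈ univ.filter (fun J : Fin m → ι => StrictMono J), g J * Complex.normSq (v J)
          = g (s.orderEmbOfFin hs) := by
      rw [sum_eq_single_of_mem _ (by simpa using (s.orderEmbOfFin hs).strictMono)]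
      · simp [hvE _ (s.orderEmbOfFin hs).strictMono]
      · intro J hJ hne
        simp [hvE J (mem_filter.mp hJ).2, hne]
    have hnorm :
        ∑ J ∈ univ.filter (fun J : Fin m → ι => StrictMono J), Complex.normSq (v J) = 1 := by
      simpa using hsum fun _ => 1
    have hle := h v hv
    rwa [hnorm, mul_one, hsum fun J => ∑ t, d (J t),
      ← sum_image (s.orderEmbOfFin hs).injective.injOn, image_orderEmbOfFin_univ] at hle
  · intro h v _
    rw [mul_sum]
    refine sum_le_sum fun J hJ => mul_le_mul_of_nonneg_right ?_ (Complex.normSq_nonneg _)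
    have hinj := (mem_filter.mp hJ).2.injective
    rw [← sum_image hinj.injOn]
    exact h _ (by simp [card_image_of_injective _ hinj])

end StrictMono

theorem stmt14_general {n q' : ℕ}
    (A : Matrix (Fin n) (Fin n) ℂ) (hA : A.IsHermitian) (c : ℝ) :
    (∀ w : (Fin (q' + 1) → Fin n) → ℂ,
      (∀ (J : Fin (q' + 1) → Fin n) (σ : Equiv.Perm (Fin (q' + 1))),
        w (J ∘ σ) = ((Equiv.Perm.sign σ : ℤ) : ℂ) * w J) →
      (∀ J : Fin (q' + 1) → Fin n, ¬ Function.Injective J → w J = 0) →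
      c * ∑ J ∈ Finset.univ.filter (fun J : Fin (q' + 1) → Fin n => StrictMono J),
            Complex.normSq (w J)
        ≤ (∑ K ∈ Finset.univ.filter (fun K : Fin q' → Fin n => StrictMono K),
            ∑ j, ∑ k, A j k * w (Fin.cons j K) * (starRingEnd ℂ) (w (Fin.cons k K))).re) ↔
    (∀ s : Finset (Fin n), s.card = q' + 1 → c ≤ ∑ i ∈ s, hA.eigenvalues i) := by
  obtain ⟨B, hB, hAB⟩ := hA.exists_mem_unitaryGroup_transpose_eq
  rw [← forall_isAlternating_le_iff]
  constructor
  · intro h v hv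
    have hw := hv.kroneckerPi_mulVec Bᴴ
    have hinv : kroneckerPi (fun _ => B) *ᵥ (kroneckerPi (fun _ => Bᴴ) *ᵥ v) = v := by
      rw [mulVec_mulVec, kroneckerPi_mul, show ((fun _ => B) * fun _ => Bᴴ) = 1 from
        funext fun _ => mem_unitaryGroup_iff.mp hB, kroneckerPi_one, one_mulVec]
    have hle := h _ hw fun J hJ => hw.eq_zero_of_not_injective hJ
    change c * _ ≤ (∑ K ∈ _, contraction A _ K).re at hle
    rwa [hw.re_sum_strictMono_contraction hB hAB, ← hw.sum_strictMono_normSq_kroneckerPi_mulVec hB,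
      hinv] at hle
  · intro h w (hw : IsAlternating w) _
    change c * _ ≤ (∑ K ∈ _, contraction A w K).re
    rw [hw.re_sum_strictMono_contraction hB hAB, ← hw.sum_strictMono_normSq_kroneckerPi_mulVec hB]
    exact h _ (hw.kroneckerPi_mulVec B)

/-- Reformulation of the Hessian condition in property `(P_q)` (here `q = q' + 1`):
for an `n×n` Hermitian matrix `A`, one has
`∑'_{|K|=q-1} ∑_{j,k} A_{jk} w_{jK} conj(w_{kK}) ≥ c ∑'_{|J|=q} |w_J|²`
for all alternating coefficient arrays `w` if and only if the sum of the `q` smallest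
eigenvalues of `A` (equivalently, of any `q` eigenvalues) is at least `c`. -/
theorem stmt14 {n q' : ℕ} (hq : q' + 1 ≤ n)
    (A : Matrix (Fin n) (Fin n) ℂ) (hA : A.IsHermitian) (c : ℝ) :
    (∀ w : (Fin (q' + 1) → Fin n) → ℂ,
      (∀ (J : Fin (q' + 1) → Fin n) (σ : Equiv.Perm (Fin (q' + 1))),
        w (J ∘ σ) = ((Equiv.Perm.sign σ : ℤ) : ℂ) * w J) →
      (∀ J : Fin (q' + 1) → Fin n, ¬ Function.Injective J → w J = 0) →
      c * ∑ J ∈ Finset.univ.filter (fun J : Fin (q' + 1) → Fin n => StrictMono J),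
            Complex.normSq (w J)
        ≤ (∑ K ∈ Finset.univ.filter (fun K : Fin q' → Fin n => StrictMono K),
            ∑ j, ∑ k, A j k * w (Fin.cons j K) * (starRingEnd ℂ) (w (Fin.cons k K))).re) ↔
    (∀ s : Finset (Fin n), s.card = q' + 1 → c ≤ ∑ i ∈ s, hA.eigenvalues i) :=
  stmt14_general A hA c
end
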